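/- Conditional expectation estimate for the random splitting proximal point algorithm: let (H,d) be a Hadamard space, f₁,…,f_N : H → (−∞,∞] proper convex lower semicontinuous functions, f = Σₙ fₙ, and (λ_k)_{k∈ℕ₀} positive reals. On a probability space, let (r_k)_{k∈ℕ₀} be independent random variables uniformly distributed on {1,…,N}. Fix x₀ ∈ H, and for each k ∈ ℕ₀ and each n ∈ {1,…,N} let x_{k+1}ⁿ denote the minimizer of z ↦ fₙ(z) + (1/(2λ_k))·d(x_k,z)², and set x_{k+1} := x_{k+1}^{r_k}. Assume there exists L > 0 such that fₙ(x_k) − fₙ(x_{k+1}ⁿ) ≤ L·d(x_k,x_{k+1}ⁿ) for every k ∈ ℕ₀ and n = 1,…,N. Let F_k := σ(x₀,…,x_k). Then for every y ∈ H with f(y) < ∞ and every k ∈ ℕ₀, almost surely E[d(x_{k+1},y)² | F_k] ≤ d(x_k,y)² − (2λ_k/N)·(f(x_k) − f(y)) + 4λ_k²·L². -/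

import Mathlib

/-!
Testing the minimality of the proximal point `p = prox_{λf}(x)` against the geodesic from `p`
to `y` gives the variational inequality `d(p,y)² ≤ d(x,y)² - 2λ(f p - f y) - d(x,p)²`.
Writing `f p = f x - (f x - f p)` and using `f x - f p ≤ L d(x,p)` together with
`2λL d - d² ≤ λ²L²` bounds `d(p,y)²` by `d(x,y)² - 2λ(f x - f y) + λ²L²`.

Since proximal points are unique, the iterate `x_k` is a function of `r_0, …, r_{k-1}`: it takes
finitely many values and `F_k` is independent of `r_k`. Conditioning on `F_k` therefore averages
this bound over the `N` equally likely values of `r_k`, and summing over `n` gives the estimate.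
-/

open Filter Topology

structure Hadamard (H : Type*) [MetricSpace H] : Type _ where
  geo : H → H → ℝ → H
  geo_zero : ∀ x y : H, geo x y 0 = x
  geo_one : ∀ x y : H, geo x y 1 = y
  geo_dist : ∀ x y : H, ∀ s ∈ Set.Icc (0 : ℝ) 1, ∀ t ∈ Set.Icc (0 : ℝ) 1,
    dist (geo x y s) (geo x y t) = |s - t| * dist x y
  cat0 : ∀ z x y : H, ∀ t ∈ Set.Icc (0 : ℝ) 1,
    dist z (geo x y t) ^ 2
      ≤ (1 - t) * dist z x ^ 2 + t * dist z y ^ 2 - t * (1 - t) * dist x y ^ 2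

def GeoConvex {H : Type*} [MetricSpace H] (G : Hadamard H) (f : H → EReal) : Prop :=
  ∀ x y : H, ∀ t ∈ Set.Icc (0 : ℝ) 1,
    f (G.geo x y t) ≤ ((1 - t : ℝ) : EReal) * f x + ((t : ℝ) : EReal) * f y

open MeasureTheory ProbabilityTheory

open Set

theorem EReal.ne_top_of_sub_le_coe {a b : EReal} {c : ℝ} (hb : b ≠ ⊤) (h : a - b ≤ c) :
    a ≠ ⊤ := by
  rintro rfl
  rw [EReal.top_sub hb, top_le_iff] at h
  exact EReal.coe_ne_top c h

theorem EReal.ne_top_of_sum_ne_top {ι : Type*} [DecidableEq ι] {s : Finset ι} {f : ι → EReal}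
    (hbot : ∀ i ∈ s, f i ≠ ⊥) (hsum : ∑ i ∈ s, f i ≠ ⊤) {i : ι} (hi : i ∈ s) : f i ≠ ⊤ := by
  intro htop
  have hrest : ∑ j ∈ s.erase i, f j ≠ ⊥ :=
    Finset.sum_induction _ (· ≠ ⊥) (fun _ _ ha hb => EReal.add_ne_bot_iff.2 ⟨ha, hb⟩)
      EReal.zero_ne_bot fun j hj => hbot j (Finset.mem_of_mem_erase hj)
  rw [← Finset.add_sum_erase s f hi, htop, EReal.top_add_of_ne_bot hrest] at hsum
  exact hsum rfl

theorem EReal.sum_eq_coe_sum_toReal {ι : Type*} (s : Finset ι) {f : ι → EReal}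
    (htop : ∀ i ∈ s, f i ≠ ⊤) (hbot : ∀ i ∈ s, f i ≠ ⊥) :
    ∑ i ∈ s, f i = ((∑ i ∈ s, (f i).toReal : ℝ) : EReal) := by
  refine (Finset.sum_congr rfl fun i hi =>
    (EReal.coe_toReal (htop i hi) (hbot i hi)).symm).trans ?_
  exact (map_sum (⟨⟨Real.toEReal, EReal.coe_zero⟩, EReal.coe_add⟩ : ℝ →+ EReal) _ s).symm

section Hadamard

variable {H : Type*} [MetricSpace H]

def IsProxPoint (f : H → EReal) (lam : ℝ) (x p : H) : Prop :=
  ∀ z, f p + ((1 / (2 * lam) * dist x p ^ 2 : ℝ) : EReal)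
    ≤ f z + ((1 / (2 * lam) * dist x z ^ 2 : ℝ) : EReal)

theorem GeoConvex.apply_geo_le {G : Hadamard H} {f : H → EReal} (hf : GeoConvex G f)
    {x y : H} {a b t : ℝ} (hx : f x = a) (hy : f y = b) (ht : t ∈ Icc (0 : ℝ) 1) :
    f (G.geo x y t) ≤ ((1 - t) * a + t * b : ℝ) :=
  (hf x y t ht).trans_eq (by rw [hx, hy]; norm_cast)

namespace IsProxPoint

variable {f : H → EReal} {lam : ℝ} {x p : H}

theorem ne_top (hp : IsProxPoint f lam x p) {y : H} (hy : f y ≠ ⊤) : f p ≠ ⊤ := by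
  intro htop
  have := (hp y).trans_lt (EReal.add_lt_top hy (EReal.coe_ne_top _))
  rw [htop, EReal.top_add_coe] at this
  exact lt_irrefl _ this

theorem mul_add_dist_sq_le (hp : IsProxPoint f lam x p) (hlam : 0 < lam) {z : H} {b c : ℝ}
    (hfp : f p = b) (hfz : f z ≤ c) :
    2 * lam * b + dist x p ^ 2 ≤ 2 * lam * c + dist x z ^ 2 := by
  have h : b + 1 / (2 * lam) * dist x p ^ 2 ≤ c + 1 / (2 * lam) * dist x z ^ 2 := by
    exact_mod_cast (hfp ▸ hp z).trans (add_le_add_left hfz _)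
  have := mul_le_mul_of_nonneg_left h (by positivity : (0 : ℝ) ≤ 2 * lam)
  field_simp at this
  linarith

theorem dist_sq_le (G : Hadamard H) (hf : GeoConvex G f) (hlam : 0 < lam)
    (hp : IsProxPoint f lam x p) {y : H} {b c : ℝ} (hfp : f p = b) (hfy : f y = c) :
    dist p y ^ 2 ≤ dist x y ^ 2 - 2 * lam * (b - c) - dist x p ^ 2 := by
  have along : ∀ t ∈ Ioc (0 : ℝ) 1,
      (1 - t) * dist p y ^ 2 ≤ dist x y ^ 2 - 2 * lam * (b - c) - dist x p ^ 2 := by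
    intro t ⟨ht0, ht1⟩
    have ht : t ∈ Icc (0 : ℝ) 1 := ⟨ht0.le, ht1⟩
    have hmin := hp.mul_add_dist_sq_le hlam hfp (hf.apply_geo_le hfp hfy ht)
    have hcat := G.cat0 x p y t ht
    refine le_of_mul_le_mul_left ?_ ht0
    nlinarith
  have hlim : Tendsto (fun t : ℝ => (1 - t) * dist p y ^ 2) (𝓝[>] 0) (𝓝 (dist p y ^ 2)) := by
    have hcont : Continuous (fun t : ℝ => (1 - t) * dist p y ^ 2) := by fun_prop
    simpa using (hcont.tendsto 0).mono_left nhdsWithin_le_nhds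
  exact le_of_tendsto hlim (eventually_of_mem (Ioc_mem_nhdsGT one_pos) along)

theorem unique (G : Hadamard H) (hf : GeoConvex G f) (hlam : 0 < lam)
    {q : H} (hp : IsProxPoint f lam x p) (hq : IsProxPoint f lam x q) {b c : ℝ}
    (hfp : f p = b) (hfq : f q = c) : p = q := by
  have hpq := hp.dist_sq_le G hf hlam hfp hfq
  have hqp := hq.dist_sq_le G hf hlam hfq hfp
  rw [dist_comm q p] at hqp
  exact dist_le_zero.1 (by nlinarith [dist_nonneg (x := p) (y := q)])

theorem exists_eq_comp {Ω : Type*} (G : Hadamard H) (hf : GeoConvex G f)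
    (hbot : ∀ v, f v ≠ ⊥) (hlam : 0 < lam) {x p : Ω → H}
    (hp : ∀ ω, IsProxPoint f lam (x ω) (p ω)) (htop : ∀ ω, f (p ω) ≠ ⊤) :
    ∃ ψ : H → H, ∀ ω, p ω = ψ (x ω) := by
  have hfactor : p.FactorsThrough x := fun ω ω' h =>
    (hp ω).unique G hf hlam (h ▸ hp ω') (EReal.coe_toReal (htop ω) (hbot _)).symm
      (EReal.coe_toReal (htop ω') (hbot _)).symm
  exact ⟨Function.extend x p id, fun ω => (hfactor.extend_apply id ω).symm⟩

theorem dist_sq_le_of_sub_le (G : Hadamard H) (hf : GeoConvex G f) (hbot : ∀ v, f v ≠ ⊥)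
    (hlam : 0 < lam) (hp : IsProxPoint f lam x p) {y : H} (hy : f y ≠ ⊤) {L : ℝ}
    (hL : f x - f p ≤ ((L * dist x p : ℝ) : EReal)) :
    dist p y ^ 2 ≤ dist x y ^ 2 - 2 * lam * ((f x).toReal - (f y).toReal) + lam ^ 2 * L ^ 2 := by
  have hfp := (EReal.coe_toReal (hp.ne_top hy) (hbot p)).symm
  have hfx : f x ≠ ⊤ := EReal.ne_top_of_sub_le_coe (hp.ne_top hy) hL
  have hL' : (f x).toReal - (f p).toReal ≤ L * dist x p := by
    rw [hfp, ← EReal.coe_toReal hfx (hbot x)] at hL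
    exact_mod_cast hL
  have := hp.dist_sq_le G hf hlam hfp (EReal.coe_toReal hy (hbot y)).symm
  nlinarith [sq_nonneg (dist x p - lam * L), mul_le_mul_of_nonneg_left hL' hlam.le]

end IsProxPoint

end Hadamard

theorem average_le_of_forall_le {N : ℕ} (hN : (N : ℝ) ≠ 0) {D a c : Fin N → ℝ} {d κ e : ℝ}
    (h : ∀ n, D n ≤ d - κ * (a n - c n) + e) :
    ∑ n, (N : ℝ)⁻¹ * D n ≤ d - κ / N * (∑ n, a n - ∑ n, c n) + e := calc
  _ ≤ ∑ n, (N : ℝ)⁻¹ * (d - κ * (a n - c n) + e) := by gcongr with n; exact h n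
  _ = d - κ / N * (∑ n, a n - ∑ n, c n) + e := by
    simp only [← Finset.mul_sum, Finset.sum_add_distrib, Finset.sum_sub_distrib,
      Finset.sum_const, Finset.card_univ, Fintype.card_fin, nsmul_eq_mul]
    field_simp

theorem Measurable.comp_of_countable_range {α β γ : Type*} {mα : MeasurableSpace α}
    [MeasurableSpace β] [MeasurableSingletonClass β] [MeasurableSpace γ] {f : α → β}
    (hf : Measurable f) (hc : (range f).Countable) (g : β → γ) : Measurable (g ∘ f) := by
  have := hc.to_subtype
  exact (measurable_of_countable (g ∘ Subtype.val)).comp (hf.subtype_mk (h := mem_range_self))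

theorem MeasureTheory.Integrable.of_finite_range {α E : Type*} {m0 : MeasurableSpace α}
    {μ : Measure α} [IsFiniteMeasure μ] [NormedAddCommGroup E] {f : α → E}
    (hf : AEStronglyMeasurable f μ) (hfin : (range f).Finite) : Integrable f μ := by
  obtain ⟨C, hC⟩ := (hfin.image (‖·‖)).bddAbove
  exact .of_bound hf C (.of_forall fun a => hC (mem_image_of_mem _ (mem_range_self a)))

theorem exists_eq_apply_history {Ω ι X : Type*} (x₀ : X) (step : ℕ → ι → X → X)
    (r : ℕ → Ω → ι) (x : ℕ → Ω → X) (h0 : ∀ ω, x 0 ω = x₀)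
    (hstep : ∀ k ω, x (k + 1) ω = step k (r k ω) (x k ω)) (k : ℕ) :
    ∃ Φ : (Fin k → ι) → X, ∀ ω, x k ω = Φ fun i => r i ω := by
  induction k with
  | zero => exact ⟨fun _ => x₀, h0⟩
  | succ k ih =>
    obtain ⟨Φ, hΦ⟩ := ih
    exact ⟨fun a => step k (a (Fin.last k)) (Φ (Fin.init a)), fun ω => by
      simp only [hstep, hΦ]; rfl⟩

theorem measurable_history {Ω ι : Type*} [MeasurableSpace ι] (r : ℕ → Ω → ι) (k : ℕ) :
    Measurable[⨆ i ∈ Iio k, MeasurableSpace.comap (r i) inferInstance]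
      (fun ω (i : Fin k) => r i ω) := by
  let : MeasurableSpace Ω := ⨆ i ∈ Iio k, MeasurableSpace.comap (r i) inferInstance
  exact measurable_pi_lambda _ fun i =>
    Measurable.of_comap_le (le_iSup₂ (f := fun j (_ : j ∈ Iio k) =>
      MeasurableSpace.comap (r j) inferInstance) i i.isLt)

theorem condExp_apply_indep_index {Ω ι : Type*} [Fintype ι] [MeasurableSpace ι]
    [MeasurableSingletonClass ι] {m m0 : MeasurableSpace Ω} {μ : Measure Ω} [IsFiniteMeasure μ]
    (hm : m ≤ m0) {R : Ω → ι} (hR : Measurable R)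
    (hind : Indep (MeasurableSpace.comap R inferInstance) m μ) {Y : ι → Ω → ℝ}
    (hYm : ∀ i, StronglyMeasurable[m] (Y i)) (hY : ∀ i, Integrable (Y i) μ) :
    μ[fun ω => Y (R ω) ω | m] =ᵐ[μ] fun ω => ∑ i, μ.real (R ⁻¹' {i}) * Y i ω := by
  set ind : ι → Ω → ℝ := fun i => (R ⁻¹' {i}).indicator 1
  have hsplit : (fun ω => Y (R ω) ω) = ∑ i, Y i * ind i := by
    ext ω
    rw [Finset.sum_apply, Finset.sum_eq_single (R ω) (fun i _ hi => by simp [ind, Ne.symm hi])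
      (by simp)]
    simp [ind]
  have hind_int : ∀ i, Integrable (ind i) μ := fun i =>
    (integrable_const 1).indicator (hR (measurableSet_singleton i))
  have hprod_int : ∀ i, Integrable (Y i * ind i) μ := fun i => by
    have : Y i * ind i = (R ⁻¹' {i}).indicator (Y i) := by ext ω; simp [ind, indicator]
    exact this ▸ (hY i).indicator (hR (measurableSet_singleton i))
  have hterm : ∀ i, μ[Y i * ind i | m] =ᵐ[μ] fun ω => μ.real (R ⁻¹' {i}) * Y i ω := fun i => by
    have hconst : μ[ind i | m] =ᵐ[μ] fun _ => μ.real (R ⁻¹' {i}) := by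
      refine (condExp_indep_eq hR.comap_le hm ?_ hind).trans ?_
      · exact stronglyMeasurable_const.indicator ⟨{i}, measurableSet_singleton i, rfl⟩
      · simp [ind, integral_indicator_one (hR (measurableSet_singleton i))]
    filter_upwards [condExp_mul_of_stronglyMeasurable_left (hYm i) (hprod_int i) (hind_int i),
      hconst] with ω h1 h2
    rw [h1, Pi.mul_apply, h2, mul_comm]
  filter_upwards [condExp_finsetSum (fun i _ => hprod_int i) m, ae_all_iff.2 hterm]
    with ω h1 h2
  rw [hsplit, h1, Finset.sum_apply]
  exact Finset.sum_congr rfl fun i _ => h2 i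

theorem condExp_next_iterate {Ω ι X : Type*} [Fintype ι] [MeasurableSpace ι]
    [MeasurableSingletonClass ι] [MeasurableSpace X] [MeasurableSingletonClass X]
    {m0 : MeasurableSpace Ω} {μ : Measure Ω} [IsFiniteMeasure μ] {r : ℕ → Ω → ι}
    (hr : ∀ k, Measurable (r k)) (hindep : iIndepFun r μ) (x₀ : X) (step : ℕ → ι → X → X)
    {x : ℕ → Ω → X} (h0 : ∀ ω, x 0 ω = x₀) (hstep : ∀ k ω, x (k + 1) ω = step k (r k ω) (x k ω))
    (g : X → ℝ) (k : ℕ) :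
    μ[fun ω => g (x (k + 1) ω) | ⨆ i ∈ Iic k, MeasurableSpace.comap (x i) inferInstance]
      =ᵐ[μ] fun ω => ∑ i, μ.real (r k ⁻¹' {i}) * g (step k i (x k ω)) := by
  choose Φ hΦ using exists_eq_apply_history x₀ step r x h0 hstep
  set M : ℕ → MeasurableSpace Ω := fun j => ⨆ i ∈ Iio j, MeasurableSpace.comap (r i) inferInstance
  set F := ⨆ i ∈ Iic k, MeasurableSpace.comap (x i) inferInstance
  have hxM : ∀ j, Measurable[M j] (x j) := fun j => by
    rw [funext (hΦ j)]
    exact (measurable_of_countable (Φ j)).comp (measurable_history r j)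
  have hFM : F ≤ M k := iSup₂_le fun i hi =>
    (hxM i).comap_le.trans (biSup_mono fun j hj => mem_Iio.2 ((mem_Iio.1 hj).trans_le hi))
  have hF : F ≤ m0 := hFM.trans (iSup₂_le fun i _ => (hr i).comap_le)
  have hind : Indep (MeasurableSpace.comap (r k) inferInstance) F μ := by
    have h := indep_iSup_of_disjoint (fun i => (hr i).comap_le)
      ((iIndepFun_iff_iIndep _ _ _).1 hindep) (S := {k}) (T := Iio k) (by simp)
    rw [iSup_singleton] at h
    exact indep_of_indep_of_le_right h hFM
  have hxF : Measurable[F] (x k) := Measurable.of_comap_le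
    (le_iSup₂ (f := fun i (_ : i ∈ Iic k) => MeasurableSpace.comap (x i) inferInstance) k
      (mem_Iic.2 le_rfl))
  have hx_fin : (range (x k)).Finite := (finite_range (Φ k)).subset <| by
    rintro _ ⟨ω, rfl⟩
    exact ⟨_, (hΦ k ω).symm⟩
  have hYF : ∀ i, Measurable[F] (g ∘ step k i ∘ x k) := fun i =>
    hxF.comp_of_countable_range hx_fin.countable (g ∘ step k i)
  have hY : ∀ i, Integrable (g ∘ step k i ∘ x k) μ := fun i => by
    refine Integrable.of_finite_range ((hYF i).mono hF le_rfl).aestronglyMeasurable ?_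
    rw [range_comp, range_comp]
    exact (hx_fin.image _).image g
  simp_rw [hstep]
  exact condExp_apply_indep_index hF (hr k) hind (fun i => (hYF i).stronglyMeasurable) hY

theorem random_splitting_ppa_condexp_estimate_general
    {H : Type*} [MetricSpace H]
    [MeasurableSpace H] [BorelSpace H]
    (G : Hadamard H)
    {Ω : Type*} {m0 : MeasurableSpace Ω} {μ : Measure Ω} [IsProbabilityMeasure μ]
    (N : ℕ) (hN : 1 ≤ N)
    (fs : Fin N → H → EReal)
    (hfs_ne_bot : ∀ n, ∀ x : H, fs n x ≠ ⊥)
    (hfs_conv : ∀ n, GeoConvex G (fs n))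
    (lam : ℕ → ℝ) (hlam_pos : ∀ k, 0 < lam k)
    (r : ℕ → Ω → Fin N) (hr_meas : ∀ k, Measurable (r k))
    (hr_indep : iIndepFun (m := fun _ : ℕ => (inferInstance : MeasurableSpace (Fin N))) r μ)
    (hr_unif : ∀ k : ℕ, ∀ n : Fin N, μ (r k ⁻¹' {n}) = (N : ENNReal)⁻¹)
    (x₀ : H) (x : ℕ → Ω → H) (xn : ℕ → Fin N → Ω → H)
    (hx0 : ∀ ω, x 0 ω = x₀)
    (hxn_min : ∀ k : ℕ, ∀ n : Fin N, ∀ ω : Ω, ∀ z : H,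
      fs n (xn k n ω) + ((1 / (2 * lam k) * dist (x k ω) (xn k n ω) ^ 2 : ℝ) : EReal)
        ≤ fs n z + ((1 / (2 * lam k) * dist (x k ω) z ^ 2 : ℝ) : EReal))
    (hrec : ∀ k : ℕ, ∀ ω : Ω, x (k + 1) ω = xn k (r k ω) ω)
    (L : ℝ)
    (hlip : ∀ k : ℕ, ∀ n : Fin N, ∀ ω : Ω,
      fs n (x k ω) - fs n (xn k n ω) ≤ ((L * dist (x k ω) (xn k n ω) : ℝ) : EReal)) :
    ∀ y : H, (∑ n, fs n y) < ⊤ → ∀ k : ℕ,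
      ∀ᵐ ω ∂μ,
        (((μ[fun ω' => dist (x (k + 1) ω') y ^ 2 |
              (⨆ i ∈ Set.Iic k, MeasurableSpace.comap (x i) inferInstance)]) ω : ℝ) : EReal)
          ≤ ((dist (x k ω) y ^ 2 : ℝ) : EReal)
              - ((2 * lam k / (N : ℝ) : ℝ) : EReal)
                * ((∑ n, fs n (x k ω)) - ∑ n, fs n y)
              + ((4 * lam k ^ 2 * L ^ 2 : ℝ) : EReal) := by
  intro y hy k
  have hy_top : ∀ n, fs n y ≠ ⊤ := fun n =>
    EReal.ne_top_of_sum_ne_top (fun n _ => hfs_ne_bot n y) hy.ne (Finset.mem_univ n)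
  have hxn_top : ∀ j n ω, fs n (xn j n ω) ≠ ⊤ := fun j n ω =>
    IsProxPoint.ne_top (hxn_min j n ω) (hy_top n)
  have hx_top : ∀ j n ω, fs n (x j ω) ≠ ⊤ := fun j n ω =>
    EReal.ne_top_of_sub_le_coe (hxn_top j n ω) (hlip j n ω)
  choose ψ hψ using fun j n => IsProxPoint.exists_eq_comp G (hfs_conv n) (hfs_ne_bot n)
    (hlam_pos j) (hxn_min j n) (hxn_top j n)
  have hstep : ∀ n ω, dist (ψ k n (x k ω)) y ^ 2 ≤ dist (x k ω) y ^ 2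
      - 2 * lam k * ((fs n (x k ω)).toReal - (fs n y).toReal) + lam k ^ 2 * L ^ 2 := fun n ω =>
    hψ k n ω ▸ IsProxPoint.dist_sq_le_of_sub_le G (hfs_conv n) (hfs_ne_bot n) (hlam_pos k)
      (hxn_min k n ω) (hy_top n) (hlip k n ω)
  filter_upwards [condExp_next_iterate hr_meas hr_indep x₀ ψ hx0 (fun j ω => by rw [hrec, hψ])
    (fun v => dist v y ^ 2) k] with ω hω
  have havg := average_le_of_forall_le (by positivity) (hstep · ω)
  rw [hω, EReal.sum_eq_coe_sum_toReal _ (fun n _ => hx_top k n ω) (fun n _ => hfs_ne_bot n _),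
    EReal.sum_eq_coe_sum_toReal _ (fun n _ => hy_top n) (fun n _ => hfs_ne_bot n _)]
  simp only [Measure.real, hr_unif, ENNReal.toReal_inv, ENNReal.toReal_natCast]
  exact_mod_cast havg.trans (by nlinarith [sq_nonneg (lam k * L)])

/-- Conditional expectation estimate for the random splitting proximal point
algorithm (Lemma on the almost-supermartingale property). -/
theorem random_splitting_ppa_condexp_estimate
    {H : Type*} [MetricSpace H] [CompleteSpace H]
    [MeasurableSpace H] [BorelSpace H]
    (G : Hadamard H)
    {Ω : Type*} {m0 : MeasurableSpace Ω} {μ : Measure Ω} [IsProbabilityMeasure μ]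
    (N : ℕ) (hN : 1 ≤ N)
    (fs : Fin N → H → EReal)
    (hfs_ne_bot : ∀ n, ∀ x : H, fs n x ≠ ⊥)
    (hfs_proper : ∀ n, ∃ x : H, fs n x ≠ ⊤)
    (hfs_conv : ∀ n, GeoConvex G (fs n))
    (hfs_lsc : ∀ n, LowerSemicontinuous (fs n))
    (lam : ℕ → ℝ) (hlam_pos : ∀ k, 0 < lam k)
    (r : ℕ → Ω → Fin N) (hr_meas : ∀ k, Measurable (r k))
    (hr_indep : iIndepFun (m := fun _ : ℕ => (inferInstance : MeasurableSpace (Fin N))) r μ)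
    (hr_unif : ∀ k : ℕ, ∀ n : Fin N, μ (r k ⁻¹' {n}) = (N : ENNReal)⁻¹)
    (x₀ : H) (x : ℕ → Ω → H) (xn : ℕ → Fin N → Ω → H)
    (hx_meas : ∀ k, Measurable (x k)) (hxn_meas : ∀ k n, Measurable (xn k n))
    (hx0 : ∀ ω, x 0 ω = x₀)
    (hxn_min : ∀ k : ℕ, ∀ n : Fin N, ∀ ω : Ω, ∀ z : H,
      fs n (xn k n ω) + ((1 / (2 * lam k) * dist (x k ω) (xn k n ω) ^ 2 : ℝ) : EReal)
        ≤ fs n z + ((1 / (2 * lam k) * dist (x k ω) z ^ 2 : ℝ) : EReal))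
    (hrec : ∀ k : ℕ, ∀ ω : Ω, x (k + 1) ω = xn k (r k ω) ω)
    (L : ℝ) (hL : 0 < L)
    (hlip : ∀ k : ℕ, ∀ n : Fin N, ∀ ω : Ω,
      fs n (x k ω) - fs n (xn k n ω) ≤ ((L * dist (x k ω) (xn k n ω) : ℝ) : EReal)) :
    ∀ y : H, (∑ n, fs n y) < ⊤ → ∀ k : ℕ,
      ∀ᵐ ω ∂μ,
        (((μ[fun ω' => dist (x (k + 1) ω') y ^ 2 |
              (⨆ i ∈ Set.Iic k, MeasurableSpace.comap (x i) inferInstance)]) ω : ℝ) : EReal)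
          ≤ ((dist (x k ω) y ^ 2 : ℝ) : EReal)
              - ((2 * lam k / (N : ℝ) : ℝ) : EReal)
                * ((∑ n, fs n (x k ω)) - ∑ n, fs n y)
              + ((4 * lam k ^ 2 * L ^ 2 : ℝ) : EReal) :=
  random_splitting_ppa_condexp_estimate_general G (m0 := m0) N hN fs hfs_ne_bot hfs_conv lam
    hlam_pos r hr_meas hr_indep hr_unif x₀ x xn hx0 hxn_min hrec L hlip
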